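/- arXiv:1011.0079 — 2 statements merged into one kernel-verified Lean document; each statement's English description precedes it below -/
import Mathlib

section
/- Let (A, ρ, 𝔹) be a complete local contact algebra and σ a bounded cluster in (A, ρ, 𝔹). Then J_σ = 𝔹 \ σ is a prime element of the frame of δ-ideals of (A, ρ, 𝔹). -/
/-- `I` is a δ-ideal of the local contact algebra `(A, ρ, 𝔹)`. -/
def IsDeltaIdeal {A : Type*} [CompleteBooleanAlgebra A] (ρ : A → A → Prop) (𝔹 : Set A)
    (I : Set A) : Prop :=
  (⊥ ∈ I) ∧ (∀ a b : A, a ≤ b → b ∈ I → a ∈ I) ∧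
  (∀ a b : A, a ∈ I → b ∈ I → a ⊔ b ∈ I) ∧ I ⊆ 𝔹 ∧
  (∀ a ∈ I, ∃ b ∈ I, ¬ ρ a bᶜ)

/-!
By (K1) and (K3), an element `a ∈ 𝔹` lies outside `σ` exactly when `¬ ρ a c`, i.e. `a ≪ cᶜ`, for
some `c ∈ σ`; interpolating `a ≪ b ≪ cᶜ` by (BC1) puts `b` in `𝔹 \ σ` too, so `𝔹 \ σ` is a
δ-ideal. For primeness, if `I₁ ∩ I₂ = 𝔹 \ σ` with both `Iᵢ` strictly larger, pick
`aᵢ ∈ Iᵢ ∩ σ` and `aᵢ ≪ bᵢ ∈ Iᵢ`. By (K1) `bᵢᶜ ∉ σ`, hence `(b₁ ⊓ b₂)ᶜ = b₁ᶜ ⊔ b₂ᶜ ∉ σ`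
by (K2), and as `⊤ ∈ σ`, (K2) again gives `b₁ ⊓ b₂ ∈ σ`. This contradicts `b₁ ⊓ b₂ ∈ I₁ ∩ I₂ = 𝔹 \ σ`.
-/

/-- (K1)–(K3) for the contact relation `C_ρ a b := ρ a b ∨ (a ∉ 𝔹 ∧ b ∉ 𝔹)`. -/
structure IsCluster {A : Type*} [BooleanAlgebra A] (ρ : A → A → Prop) (𝔹 σ : Set A) : Prop where
  contact : ∀ a ∈ σ, ∀ b ∈ σ, ρ a b ∨ (a ∉ 𝔹 ∧ b ∉ 𝔹)
  mem_or_mem_of_sup_mem : ∀ a b : A, a ⊔ b ∈ σ → a ∈ σ ∨ b ∈ σ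
  mem_of_forall_contact : ∀ a : A, (∀ b ∈ σ, ρ a b ∨ (a ∉ 𝔹 ∧ b ∉ 𝔹)) → a ∈ σ

theorem IsDeltaIdeal.exists_mem_not_contact_compl {A : Type*} [CompleteBooleanAlgebra A]
    {ρ : A → A → Prop} {𝔹 σ I : Set A} (hI : IsDeltaIdeal ρ 𝔹 I) (hσI : 𝔹 \ σ ⊆ I)
    (hne : I ≠ 𝔹 \ σ) : ∃ a ∈ σ, a ∈ 𝔹 ∧ ∃ b ∈ I, ¬ ρ a bᶜ := by
  obtain ⟨-, -, -, hI𝔹, hδ⟩ := hI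
  obtain ⟨a, haI, haσ⟩ := Set.not_subset.mp fun h => hne (h.antisymm hσI)
  exact ⟨a, not_not.mp fun h => haσ ⟨hI𝔹 haI, h⟩, hI𝔹 haI, hδ a haI⟩

namespace IsCluster

section BooleanAlgebra

variable {A : Type*} [BooleanAlgebra A] {ρ : A → A → Prop} {𝔹 σ : Set A}

theorem mem_of_le (hσ : IsCluster ρ 𝔹 σ) (hC3 : ∀ a b : A, ρ a b → ρ b a)
    (hC4 : ∀ a b c : A, ρ a (b ⊔ c) ↔ ρ a b ∨ ρ a c)
    (hdown : ∀ a b : A, a ≤ b → b ∈ 𝔹 → a ∈ 𝔹) {a b : A} (ha : a ∈ σ) (hab : a ≤ b) :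
    b ∈ σ := by
  refine hσ.mem_of_forall_contact b fun c hc => ?_
  rcases hσ.contact a ha c hc with hac | ⟨ha𝔹, hc𝔹⟩
  · have hcb : ρ c (a ⊔ b) := (hC4 c a b).mpr (Or.inl (hC3 a c hac))
    rw [sup_eq_right.mpr hab] at hcb
    exact Or.inl (hC3 c b hcb)
  · exact Or.inr ⟨fun hb𝔹 => ha𝔹 (hdown a b hab hb𝔹), hc𝔹⟩

theorem bot_notMem (hσ : IsCluster ρ 𝔹 σ) (hC2 : ∀ a b : A, ρ a b → a ≠ ⊥ ∧ b ≠ ⊥)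
    (hbot : ⊥ ∈ 𝔹) : (⊥ : A) ∉ σ := fun h =>
  (hσ.contact ⊥ h ⊥ h).elim (fun h' => (hC2 ⊥ ⊥ h').1 rfl) fun h' => h'.1 hbot

theorem notMem_of_not_contact (hσ : IsCluster ρ 𝔹 σ) {a b : A} (ha : a ∈ σ) (ha𝔹 : a ∈ 𝔹)
    (hab : ¬ ρ a b) : b ∉ σ := fun hb =>
  (hσ.contact a ha b hb).elim hab fun h => h.1 ha𝔹

theorem compl_mem_of_notMem (hσ : IsCluster ρ 𝔹 σ) (htop : ⊤ ∈ σ) {a : A} (ha : a ∉ σ) :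
    aᶜ ∈ σ :=
  (hσ.mem_or_mem_of_sup_mem a aᶜ (sup_compl_eq_top (x := a) ▸ htop)).resolve_left ha

theorem inf_mem_of_not_contact_compl (hσ : IsCluster ρ 𝔹 σ) (htop : ⊤ ∈ σ)
    {a₁ a₂ b₁ b₂ : A} (ha₁ : a₁ ∈ σ) (ha₁𝔹 : a₁ ∈ 𝔹) (hab₁ : ¬ ρ a₁ b₁ᶜ)
    (ha₂ : a₂ ∈ σ) (ha₂𝔹 : a₂ ∈ 𝔹) (hab₂ : ¬ ρ a₂ b₂ᶜ) : b₁ ⊓ b₂ ∈ σ := by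
  by_contra hb
  have hcompl : b₁ᶜ ⊔ b₂ᶜ ∈ σ := compl_inf (x := b₁) ▸ hσ.compl_mem_of_notMem htop hb
  exact (hσ.mem_or_mem_of_sup_mem _ _ hcompl).elim
    (hσ.notMem_of_not_contact ha₁ ha₁𝔹 hab₁) (hσ.notMem_of_not_contact ha₂ ha₂𝔹 hab₂)

end BooleanAlgebra

section CompleteBooleanAlgebra

variable {A : Type*} [CompleteBooleanAlgebra A] {ρ : A → A → Prop} {𝔹 σ : Set A}

theorem isDeltaIdeal_diff (hσ : IsCluster ρ 𝔹 σ) (hC2 : ∀ a b : A, ρ a b → a ≠ ⊥ ∧ b ≠ ⊥)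
    (hC3 : ∀ a b : A, ρ a b → ρ b a) (hC4 : ∀ a b c : A, ρ a (b ⊔ c) ↔ ρ a b ∨ ρ a c)
    (hbot : ⊥ ∈ 𝔹) (hdown : ∀ a b : A, a ≤ b → b ∈ 𝔹 → a ∈ 𝔹)
    (hsup : ∀ a b : A, a ∈ 𝔹 → b ∈ 𝔹 → a ⊔ b ∈ 𝔹)
    (hBC1 : ∀ a c : A, a ∈ 𝔹 → ¬ ρ a cᶜ → ∃ b ∈ 𝔹, ¬ ρ a bᶜ ∧ ¬ ρ b cᶜ) :
    IsDeltaIdeal ρ 𝔹 (𝔹 \ σ) := by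
  refine ⟨⟨hbot, hσ.bot_notMem hC2 hbot⟩, fun a b hab hb => ?_, fun a b ha hb => ?_,
    Set.sdiff_subset, fun a ha => ?_⟩
  · exact ⟨hdown a b hab hb.1, fun ha => hb.2 (hσ.mem_of_le hC3 hC4 hdown ha hab)⟩
  · exact ⟨hsup a b ha.1 hb.1, fun h => (hσ.mem_or_mem_of_sup_mem a b h).elim ha.2 hb.2⟩
  · obtain ⟨c, hc, hac, -⟩ : ∃ c ∈ σ, ¬ ρ a c ∧ ¬ (a ∉ 𝔹 ∧ c ∉ 𝔹) := by
      by_contra! h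
      exact ha.2 (hσ.mem_of_forall_contact a fun c hc => (em (ρ a c)).imp_right (h c hc))
    obtain ⟨b, hb𝔹, hab, hbc⟩ := hBC1 a cᶜ ha.1 (by rwa [compl_compl])
    rw [compl_compl] at hbc
    exact ⟨b, ⟨hb𝔹, fun hb => hσ.notMem_of_not_contact hb hb𝔹 hbc hc⟩, hab⟩

theorem eq_or_eq_of_inter_eq_diff (hσ : IsCluster ρ 𝔹 σ) (htop : ⊤ ∈ σ) {I₁ I₂ : Set A}
    (hI₁ : IsDeltaIdeal ρ 𝔹 I₁) (hI₂ : IsDeltaIdeal ρ 𝔹 I₂) (hinter : I₁ ∩ I₂ = 𝔹 \ σ) :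
    I₁ = 𝔹 \ σ ∨ I₂ = 𝔹 \ σ := by
  by_contra! hne
  obtain ⟨a₁, ha₁, ha₁𝔹, b₁, hb₁, hab₁⟩ :=
    hI₁.exists_mem_not_contact_compl (hinter ▸ Set.inter_subset_left) hne.1
  obtain ⟨a₂, ha₂, ha₂𝔹, b₂, hb₂, hab₂⟩ :=
    hI₂.exists_mem_not_contact_compl (hinter ▸ Set.inter_subset_right) hne.2
  have hinf : b₁ ⊓ b₂ ∈ 𝔹 \ σ :=
    hinter ▸ ⟨hI₁.2.1 _ _ inf_le_left hb₁, hI₂.2.1 _ _ inf_le_right hb₂⟩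
  exact hinf.2 (hσ.inf_mem_of_not_contact_compl htop ha₁ ha₁𝔹 hab₁ ha₂ ha₂𝔹 hab₂)

end CompleteBooleanAlgebra

end IsCluster

theorem stmt_12_general {A : Type*} [CompleteBooleanAlgebra A] (ρ : A → A → Prop) (𝔹 : Set A)
    (hC2 : ∀ a b : A, ρ a b → a ≠ ⊥ ∧ b ≠ ⊥)
    (hC3 : ∀ a b : A, ρ a b → ρ b a)
    (hC4 : ∀ a b c : A, ρ a (b ⊔ c) ↔ ρ a b ∨ ρ a c)
    (hbot : ⊥ ∈ 𝔹)
    (hdown : ∀ a b : A, a ≤ b → b ∈ 𝔹 → a ∈ 𝔹)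
    (hsup : ∀ a b : A, a ∈ 𝔹 → b ∈ 𝔹 → a ⊔ b ∈ 𝔹)
    (hBC1 : ∀ a c : A, a ∈ 𝔹 → ¬ ρ a cᶜ → ∃ b ∈ 𝔹, ¬ ρ a bᶜ ∧ ¬ ρ b cᶜ)
    (σ : Set A)
    -- σ is a cluster in (A, C_ρ), where C_ρ a b := ρ a b ∨ (a ∉ 𝔹 ∧ b ∉ 𝔹)
    (hK1 : ∀ a ∈ σ, ∀ b ∈ σ, ρ a b ∨ (a ∉ 𝔹 ∧ b ∉ 𝔹))
    (hK2 : ∀ a b : A, a ⊔ b ∈ σ → a ∈ σ ∨ b ∈ σ)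
    (hK3 : ∀ a : A, (∀ b ∈ σ, ρ a b ∨ (a ∉ 𝔹 ∧ b ∉ 𝔹)) → a ∈ σ)
    -- σ is bounded
    (hb : (σ ∩ 𝔹).Nonempty) :
    IsDeltaIdeal ρ 𝔹 (𝔹 \ σ) ∧ 𝔹 \ σ ≠ 𝔹 ∧
    (∀ I₁ I₂ : Set A, IsDeltaIdeal ρ 𝔹 I₁ → IsDeltaIdeal ρ 𝔹 I₂ →
      I₁ ∩ I₂ = 𝔹 \ σ → I₁ = 𝔹 \ σ ∨ I₂ = 𝔹 \ σ) := by
  have hσ : IsCluster ρ 𝔹 σ := ⟨hK1, hK2, hK3⟩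
  obtain ⟨x, hxσ, hx𝔹⟩ := hb
  have htop : ⊤ ∈ σ := hσ.mem_of_le hC3 hC4 hdown hxσ le_top
  refine ⟨hσ.isDeltaIdeal_diff hC2 hC3 hC4 hbot hdown hsup hBC1, fun h => ?_,
    fun I₁ I₂ => hσ.eq_or_eq_of_inter_eq_diff htop⟩
  rw [← h] at hx𝔹
  exact hx𝔹.2 hxσ

/-- If σ is a bounded cluster of a complete local contact algebra (A, ρ, 𝔹),
then J_σ = 𝔹 \ σ is a prime element of the frame of δ-ideals (whose top is 𝔹
and whose meets are intersections). -/
theorem stmt_12 {A : Type*} [CompleteBooleanAlgebra A] (ρ : A → A → Prop) (𝔹 : Set A)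
    (hC1 : ∀ a : A, a ≠ ⊥ → ρ a a)
    (hC2 : ∀ a b : A, ρ a b → a ≠ ⊥ ∧ b ≠ ⊥)
    (hC3 : ∀ a b : A, ρ a b → ρ b a)
    (hC4 : ∀ a b c : A, ρ a (b ⊔ c) ↔ ρ a b ∨ ρ a c)
    (hbot : ⊥ ∈ 𝔹)
    (hdown : ∀ a b : A, a ≤ b → b ∈ 𝔹 → a ∈ 𝔹)
    (hsup : ∀ a b : A, a ∈ 𝔹 → b ∈ 𝔹 → a ⊔ b ∈ 𝔹)
    (hBC1 : ∀ a c : A, a ∈ 𝔹 → ¬ ρ a cᶜ → ∃ b ∈ 𝔹, ¬ ρ a bᶜ ∧ ¬ ρ b cᶜ)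
    (hBC2 : ∀ a b : A, ρ a b → ∃ c ∈ 𝔹, ρ a (c ⊓ b))
    (hBC3 : ∀ a : A, a ≠ ⊥ → ∃ b ∈ 𝔹, b ≠ ⊥ ∧ ¬ ρ b aᶜ)
    (σ : Set A)
    -- σ is a cluster in (A, C_ρ), where C_ρ a b := ρ a b ∨ (a ∉ 𝔹 ∧ b ∉ 𝔹)
    (hne : σ.Nonempty)
    (hK1 : ∀ a ∈ σ, ∀ b ∈ σ, ρ a b ∨ (a ∉ 𝔹 ∧ b ∉ 𝔹))
    (hK2 : ∀ a b : A, a ⊔ b ∈ σ → a ∈ σ ∨ b ∈ σ)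
    (hK3 : ∀ a : A, (∀ b ∈ σ, ρ a b ∨ (a ∉ 𝔹 ∧ b ∉ 𝔹)) → a ∈ σ)
    -- σ is bounded
    (hb : (σ ∩ 𝔹).Nonempty) :
    IsDeltaIdeal ρ 𝔹 (𝔹 \ σ) ∧ 𝔹 \ σ ≠ 𝔹 ∧
    (∀ I₁ I₂ : Set A, IsDeltaIdeal ρ 𝔹 I₁ → IsDeltaIdeal ρ 𝔹 I₂ →
      I₁ ∩ I₂ = 𝔹 \ σ → I₁ = 𝔹 \ σ ∨ I₂ = 𝔹 \ σ) :=
  stmt_12_general ρ 𝔹 hC2 hC3 hC4 hbot hdown hsup hBC1 σ hK1 hK2 hK3 hb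
end

section
/- Let (A, ρ, 𝔹) and (B, η, 𝔹') be local contact algebras and φ : A → B an LCA-isomorphism (a Boolean isomorphism with a ρ b iff φ(a) η φ(b), and a ∈ 𝔹 iff φ(a) ∈ 𝔹'). Then for every a ∈ A, I_{φ(a)} = ⋁{I_{φ(b)} : b ∈ 𝔹, b ≪_ρ a}, where the join is taken in the frame of δ-ideals of (B, η, 𝔹'), and moreover this join equals the union ⋃{I_{φ(b)} : b ∈ 𝔹, b ≪_ρ a}. -/
/-!
Inside `(B, η, 𝔹')` alone, `I_c` is the union of the `I_e` with `e ∈ 𝔹'` and `e ≪ c`: one inclusion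
is the interpolation axiom (BC1), the other holds because `≪` refines `≤`. The isomorphism `φ`
turns the family `{I_{φ b} : b ∈ 𝔹, b ≪_ρ a}` into exactly this family for `c = φ a`. Finally
`I_c` is an ideal, so the ideal generated by the union is the union itself.
-/

/-- The join of a family of ideals in Idl(B): all finite joins of elements
of the members of the family. -/
def idealJoin {B : Type*} [BooleanAlgebra B] (S : Set (Set B)) : Set B :=
  {x : B | ∃ s : Finset B, (↑s : Set B) ⊆ ⋃₀ S ∧ x = s.sup id}

theorem idealJoin_eq_sUnion {B : Type*} [BooleanAlgebra B] {S : Set (Set B)}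
    (hbot : ⊥ ∈ ⋃₀ S) (hsup : SupClosed (⋃₀ S)) : idealJoin S = ⋃₀ S := by
  ext x
  constructor
  · rintro ⟨s, hs, rfl⟩
    exact Finset.sup_mem _ hbot (fun _ hx _ hy => hsup hx hy) s id hs
  · intro hx
    exact ⟨{x}, by simpa using hx, by simp⟩

namespace ContactAlgebra

variable {B : Type*} [BooleanAlgebra B] {η : B → B → Prop}

/-- `I_c = {d ∈ 𝔹' : d ≪_η c}`. -/
def wellInsideIdeal (η : B → B → Prop) (𝔹' : Set B) (c : B) : Set B :=
  {d : B | d ∈ 𝔹' ∧ ¬ η d cᶜ}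

theorem contact_mono_right (hC4 : ∀ a b c : B, η a (b ⊔ c) ↔ η a b ∨ η a c)
    {x y z : B} (h : η x y) (hyz : y ≤ z) : η x z := by
  simpa [sup_eq_right.mpr hyz] using (hC4 x y z).2 (Or.inl h)

theorem le_of_not_contact_compl (hC1 : ∀ a : B, a ≠ ⊥ → η a a)
    (hC3 : ∀ a b : B, η a b → η b a) (hC4 : ∀ a b c : B, η a (b ⊔ c) ↔ η a b ∨ η a c)
    {x y : B} (h : ¬ η x yᶜ) : x ≤ y := by
  by_contra hxy
  have hne : x ⊓ yᶜ ≠ ⊥ := fun h0 => hxy (disjoint_compl_right_iff.mp (disjoint_iff.mpr h0))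
  have h₁ : η (x ⊓ yᶜ) yᶜ := contact_mono_right hC4 (hC1 _ hne) inf_le_right
  have h₂ : η yᶜ x := contact_mono_right hC4 (hC3 _ _ h₁) inf_le_left
  exact h (hC3 _ _ h₂)

theorem wellInsideIdeal_mono (hC4 : ∀ a b c : B, η a (b ⊔ c) ↔ η a b ∨ η a c)
    {𝔹' : Set B} {c c' : B} (hcc' : c ≤ c') :
    wellInsideIdeal η 𝔹' c ⊆ wellInsideIdeal η 𝔹' c' :=
  fun _ ⟨hd, hdc⟩ => ⟨hd, fun h => hdc (contact_mono_right hC4 h (compl_le_compl hcc'))⟩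

theorem bot_mem_wellInsideIdeal (hC2 : ∀ a b : B, η a b → a ≠ ⊥ ∧ b ≠ ⊥)
    {𝔹' : Set B} (hbot : ⊥ ∈ 𝔹') (c : B) : ⊥ ∈ wellInsideIdeal η 𝔹' c :=
  ⟨hbot, fun h => (hC2 _ _ h).1 rfl⟩

theorem supClosed_wellInsideIdeal (hC3 : ∀ a b : B, η a b → η b a)
    (hC4 : ∀ a b c : B, η a (b ⊔ c) ↔ η a b ∨ η a c)
    {𝔹' : Set B} (hsup : ∀ a b : B, a ∈ 𝔹' → b ∈ 𝔹' → a ⊔ b ∈ 𝔹') (c : B) :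
    SupClosed (wellInsideIdeal η 𝔹' c) := by
  rintro x ⟨hx, hxc⟩ y ⟨hy, hyc⟩
  refine ⟨hsup _ _ hx hy, fun h => ?_⟩
  rcases (hC4 _ _ _).1 (hC3 _ _ h) with h' | h'
  · exact hxc (hC3 _ _ h')
  · exact hyc (hC3 _ _ h')

theorem wellInsideIdeal_eq_sUnion (hC1 : ∀ a : B, a ≠ ⊥ → η a a)
    (hC3 : ∀ a b : B, η a b → η b a) (hC4 : ∀ a b c : B, η a (b ⊔ c) ↔ η a b ∨ η a c)
    {𝔹' : Set B} (hBC1 : ∀ a c : B, a ∈ 𝔹' → ¬ η a cᶜ → ∃ b ∈ 𝔹', ¬ η a bᶜ ∧ ¬ η b cᶜ)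
    (c : B) :
    wellInsideIdeal η 𝔹' c =
      ⋃₀ {I | ∃ e, e ∈ 𝔹' ∧ ¬ η e cᶜ ∧ I = wellInsideIdeal η 𝔹' e} := by
  ext d
  constructor
  · rintro ⟨hd, hdc⟩
    obtain ⟨e, he, hde, hec⟩ := hBC1 d c hd hdc
    exact ⟨_, ⟨e, he, hec, rfl⟩, hd, hde⟩
  · rintro ⟨_, ⟨e, -, hec, rfl⟩, hde⟩
    exact wellInsideIdeal_mono hC4 (le_of_not_contact_compl hC1 hC3 hC4 hec) hde

end ContactAlgebra

open ContactAlgebra in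
theorem stmt_19_general {A B : Type*} [BooleanAlgebra A] [BooleanAlgebra B]
    (ρ : A → A → Prop) (𝔹 : Set A) (η : B → B → Prop) (𝔹' : Set B)
    -- (B, η, 𝔹') is a local contact algebra
    (hC1' : ∀ a : B, a ≠ ⊥ → η a a)
    (hC2' : ∀ a b : B, η a b → a ≠ ⊥ ∧ b ≠ ⊥)
    (hC3' : ∀ a b : B, η a b → η b a)
    (hC4' : ∀ a b c : B, η a (b ⊔ c) ↔ η a b ∨ η a c)
    (hbot' : ⊥ ∈ 𝔹')
    (hsup' : ∀ a b : B, a ∈ 𝔹' → b ∈ 𝔹' → a ⊔ b ∈ 𝔹')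
    (hBC1' : ∀ a c : B, a ∈ 𝔹' → ¬ η a cᶜ → ∃ b ∈ 𝔹', ¬ η a bᶜ ∧ ¬ η b cᶜ)
    -- φ is an LCA-isomorphism
    (φ : A → B) (hbij : Function.Bijective φ)
    (hφcompl : ∀ a : A, φ aᶜ = (φ a)ᶜ)
    (hφρ : ∀ a b : A, ρ a b ↔ η (φ a) (φ b))
    (hφ𝔹 : ∀ a : A, a ∈ 𝔹 ↔ φ a ∈ 𝔹')
    (a : A) :
    {d : B | d ∈ 𝔹' ∧ ¬ η d (φ a)ᶜ} =
      idealJoin {I : Set B | ∃ b : A, b ∈ 𝔹 ∧ ¬ ρ b aᶜ ∧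
        I = {d : B | d ∈ 𝔹' ∧ ¬ η d (φ b)ᶜ}} ∧
    {d : B | d ∈ 𝔹' ∧ ¬ η d (φ a)ᶜ} =
      ⋃₀ {I : Set B | ∃ b : A, b ∈ 𝔹 ∧ ¬ ρ b aᶜ ∧
        I = {d : B | d ∈ 𝔹' ∧ ¬ η d (φ b)ᶜ}} := by
  have hfamily : {I : Set B | ∃ b : A, b ∈ 𝔹 ∧ ¬ ρ b aᶜ ∧ I = wellInsideIdeal η 𝔹' (φ b)} =
      {I | ∃ e, e ∈ 𝔹' ∧ ¬ η e (φ a)ᶜ ∧ I = wellInsideIdeal η 𝔹' e} := by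
    ext I
    constructor
    · rintro ⟨b, hb, hba, rfl⟩
      exact ⟨φ b, (hφ𝔹 b).1 hb, by rwa [hφρ, hφcompl] at hba, rfl⟩
    · rintro ⟨e, he, hea, rfl⟩
      obtain ⟨b, rfl⟩ := hbij.2 e
      exact ⟨b, (hφ𝔹 b).2 he, by rwa [hφρ, hφcompl], rfl⟩
  have hunion := wellInsideIdeal_eq_sUnion hC1' hC3' hC4' hBC1' (φ a)
  rw [← hfamily] at hunion
  refine ⟨?_, hunion⟩
  rw [idealJoin_eq_sUnion (hunion ▸ bot_mem_wellInsideIdeal hC2' hbot' _)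
    (hunion ▸ supClosed_wellInsideIdeal hC3' hC4' hsup' _)]
  exact hunion

/-- If φ : (A, ρ, 𝔹) → (B, η, 𝔹') is an LCA-isomorphism, then for every a ∈ A,
I_{φ(a)} = ⋁{I_{φ(b)} : b ∈ 𝔹, b ≪_ρ a} (join in the frame of δ-ideals of
(B, η, 𝔹'), which coincides with the join of ideals), and moreover this join
equals the union ⋃{I_{φ(b)} : b ∈ 𝔹, b ≪_ρ a}.
Here I_c = {d ∈ 𝔹' : d ≪_η c} and u ≪_θ v means ¬ θ u vᶜ. -/
theorem stmt_19 {A B : Type*} [BooleanAlgebra A] [BooleanAlgebra B]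
    (ρ : A → A → Prop) (𝔹 : Set A) (η : B → B → Prop) (𝔹' : Set B)
    -- (A, ρ, 𝔹) is a local contact algebra
    (hC1 : ∀ a : A, a ≠ ⊥ → ρ a a)
    (hC2 : ∀ a b : A, ρ a b → a ≠ ⊥ ∧ b ≠ ⊥)
    (hC3 : ∀ a b : A, ρ a b → ρ b a)
    (hC4 : ∀ a b c : A, ρ a (b ⊔ c) ↔ ρ a b ∨ ρ a c)
    (hbot : ⊥ ∈ 𝔹)
    (hdown : ∀ a b : A, a ≤ b → b ∈ 𝔹 → a ∈ 𝔹)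
    (hsup : ∀ a b : A, a ∈ 𝔹 → b ∈ 𝔹 → a ⊔ b ∈ 𝔹)
    (hBC1 : ∀ a c : A, a ∈ 𝔹 → ¬ ρ a cᶜ → ∃ b ∈ 𝔹, ¬ ρ a bᶜ ∧ ¬ ρ b cᶜ)
    (hBC2 : ∀ a b : A, ρ a b → ∃ c ∈ 𝔹, ρ a (c ⊓ b))
    (hBC3 : ∀ a : A, a ≠ ⊥ → ∃ b ∈ 𝔹, b ≠ ⊥ ∧ ¬ ρ b aᶜ)
    -- (B, η, 𝔹') is a local contact algebra
    (hC1' : ∀ a : B, a ≠ ⊥ → η a a)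
    (hC2' : ∀ a b : B, η a b → a ≠ ⊥ ∧ b ≠ ⊥)
    (hC3' : ∀ a b : B, η a b → η b a)
    (hC4' : ∀ a b c : B, η a (b ⊔ c) ↔ η a b ∨ η a c)
    (hbot' : ⊥ ∈ 𝔹')
    (hdown' : ∀ a b : B, a ≤ b → b ∈ 𝔹' → a ∈ 𝔹')
    (hsup' : ∀ a b : B, a ∈ 𝔹' → b ∈ 𝔹' → a ⊔ b ∈ 𝔹')
    (hBC1' : ∀ a c : B, a ∈ 𝔹' → ¬ η a cᶜ → ∃ b ∈ 𝔹', ¬ η a bᶜ ∧ ¬ η b cᶜ)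
    (hBC2' : ∀ a b : B, η a b → ∃ c ∈ 𝔹', η a (c ⊓ b))
    (hBC3' : ∀ a : B, a ≠ ⊥ → ∃ b ∈ 𝔹', b ≠ ⊥ ∧ ¬ η b aᶜ)
    -- φ is an LCA-isomorphism
    (φ : A → B) (hbij : Function.Bijective φ)
    (hφsup : ∀ a b : A, φ (a ⊔ b) = φ a ⊔ φ b)
    (hφinf : ∀ a b : A, φ (a ⊓ b) = φ a ⊓ φ b)
    (hφcompl : ∀ a : A, φ aᶜ = (φ a)ᶜ)
    (hφbot : φ ⊥ = ⊥) (hφtop : φ ⊤ = ⊤)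
    (hφρ : ∀ a b : A, ρ a b ↔ η (φ a) (φ b))
    (hφ𝔹 : ∀ a : A, a ∈ 𝔹 ↔ φ a ∈ 𝔹')
    (a : A) :
    {d : B | d ∈ 𝔹' ∧ ¬ η d (φ a)ᶜ} =
      idealJoin {I : Set B | ∃ b : A, b ∈ 𝔹 ∧ ¬ ρ b aᶜ ∧
        I = {d : B | d ∈ 𝔹' ∧ ¬ η d (φ b)ᶜ}} ∧
    {d : B | d ∈ 𝔹' ∧ ¬ η d (φ a)ᶜ} =
      ⋃₀ {I : Set B | ∃ b : A, b ∈ 𝔹 ∧ ¬ ρ b aᶜ ∧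
        I = {d : B | d ∈ 𝔹' ∧ ¬ η d (φ b)ᶜ}} :=
  stmt_19_general ρ 𝔹 η 𝔹' hC1' hC2' hC3' hC4' hbot' hsup' hBC1' φ hbij hφcompl hφρ hφ𝔹 a
end
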